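/- Let Y be a subgroup of ℚ and let f_1, f_2, f_3 be normalized positive definite functions on Y satisfying equation (S-D T): f_1(u_1+u_2+u_3)·f_2(u_1−u_2−u_3)·f_3(u_1+u_2−u_3) = f_1(u_1)f_1(u_2)f_1(u_3)·f_2(u_1)f_2(−u_2)f_2(−u_3)·f_3(u_1)f_3(u_2)f_3(−u_3) for all u_1, u_2, u_3 ∈ Y. If t_1, t_2 ∈ Y belong to the same coset of the subgroup 2Y = {2y : y ∈ Y} (i.e. t_1 − t_2 ∈ 2Y), then for every permutation (i_1, i_2, i_3) of (1,2,3) one has |f_{i_1}(t_1)|·|f_{i_2}(t_2)|·|f_{i_3}(t_2)| = |f_{i_1}(t_2)|·|f_{i_2}(t_1)|·|f_{i_3}(t_1)|. -/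

import Mathlib

/-- `f : Y → ℂ` is a positive definite function on the abelian group `Y`. -/
def IsPosDefFn {Y : Type*} [AddCommGroup Y] (f : Y → ℂ) : Prop :=
  ∀ (n : ℕ) (y : Fin n → Y) (c : Fin n → ℂ),
    0 ≤ (∑ i, ∑ j, f (y i - y j) * c i * (starRingEnd ℂ) (c j)).re ∧
    (∑ i, ∑ j, f (y i - y j) * c i * (starRingEnd ℂ) (c j)).im = 0

/-- Equation (S-D T) for functions `f₁, f₂, f₃` on an abelian group. -/
def SDTEq {Y : Type*} [AddCommGroup Y] (f₁ f₂ f₃ : Y → ℂ) : Prop :=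
  ∀ u₁ u₂ u₃ : Y,
    f₁ (u₁ + u₂ + u₃) * f₂ (u₁ - u₂ - u₃) * f₃ (u₁ + u₂ - u₃) =
      f₁ u₁ * f₁ u₂ * f₁ u₃ * (f₂ u₁ * f₂ (-u₂) * f₂ (-u₃)) *
        (f₃ u₁ * f₃ u₂ * f₃ (-u₃))

/-! Positive definiteness gives `f (-u) = conj (f u)`, so taking norms in (S-D T) gives
`N₁(u₁+u₂+u₃) N₂(u₁-u₂-u₃) N₃(u₁+u₂-u₃) = V u₁ V u₂ V u₃` for `Nᵢ = ‖fᵢ‖` and the even function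
`V = N₁ N₂ N₃`. Writing `t₁ = s + z`, `t₂ = s - z`, eight instances of this identity show that
each of the six products `N₁ x₁ N₂ x₂ N₃ x₃` with `xᵢ ∈ {t₁, t₂}` not all equal has the value
`V s V 0 V z`; the claimed identities equate two such products. -/

open ComplexConjugate

namespace IsPosDefFn

variable {Y : Type*} [AddCommGroup Y] {f : Y → ℂ}

theorem im_map_zero (hf : IsPosDefFn f) : (f 0).im = 0 := by
  simpa using (hf 1 ![0] ![1]).2

theorem map_neg (hf : IsPosDefFn f) (u : Y) : f (-u) = conj (f u) := by
  have hermitian (t : ℂ) :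
      (f (-u)).im * t.re - (f (-u)).re * t.im + ((f u).im * t.re + (f u).re * t.im) = 0 := by
    have := (hf 2 ![0, u] ![1, t]).2
    simp only [Fin.sum_univ_two, Matrix.cons_val_zero, Matrix.cons_val_one,
      Matrix.cons_val_fin_one, sub_zero, zero_sub, sub_self, map_one, mul_one, Complex.add_im,
      Complex.mul_im, Complex.mul_re, Complex.conj_re, Complex.conj_im, hf.im_map_zero, mul_neg,
      zero_mul, zero_add, add_zero] at this
    linarith
  have h₁ := hermitian 1
  have hI := hermitian Complex.I
  simp only [Complex.one_re, Complex.one_im, Complex.I_re, Complex.I_im] at h₁ hI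
  apply Complex.ext <;> simp only [Complex.conj_re, Complex.conj_im] <;> linarith

theorem norm_map_neg (hf : IsPosDefFn f) (u : Y) : ‖f (-u)‖ = ‖f u‖ := by
  rw [hf.map_neg, Complex.norm_conj]

end IsPosDefFn

namespace SDTEq

variable {Y : Type*} [AddCommGroup Y] {f₁ f₂ f₃ : Y → ℂ}

noncomputable def normProd (f₁ f₂ f₃ : Y → ℂ) (u : Y) : ℝ := ‖f₁ u‖ * ‖f₂ u‖ * ‖f₃ u‖

theorem normProd_neg (h₁ : IsPosDefFn f₁) (h₂ : IsPosDefFn f₂) (h₃ : IsPosDefFn f₃) (u : Y) :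
    normProd f₁ f₂ f₃ (-u) = normProd f₁ f₂ f₃ u := by
  simp only [normProd, h₁.norm_map_neg, h₂.norm_map_neg, h₃.norm_map_neg]

theorem norm_mul_norm_mul_norm (h : SDTEq f₁ f₂ f₃) (h₂ : IsPosDefFn f₂) (h₃ : IsPosDefFn f₃)
    (u₁ u₂ u₃ : Y) :
    ‖f₁ (u₁ + u₂ + u₃)‖ * ‖f₂ (u₁ - u₂ - u₃)‖ * ‖f₃ (u₁ + u₂ - u₃)‖ =
      normProd f₁ f₂ f₃ u₁ * normProd f₁ f₂ f₃ u₂ * normProd f₁ f₂ f₃ u₃ := by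
  have := congrArg (‖·‖) (h u₁ u₂ u₃)
  simp only [norm_mul, h₂.norm_map_neg, h₃.norm_map_neg] at this
  rw [this, normProd, normProd, normProd]
  ring

theorem norm_coset_identities (h : SDTEq f₁ f₂ f₃) (h₁ : IsPosDefFn f₁) (h₂ : IsPosDefFn f₂)
    (h₃ : IsPosDefFn f₃) {t₁ t₂ z : Y} (ht : t₁ - t₂ = z + z) :
    ‖f₁ t₁‖ * ‖f₂ t₂‖ * ‖f₃ t₂‖ = ‖f₁ t₂‖ * ‖f₂ t₁‖ * ‖f₃ t₁‖ ∧
    ‖f₂ t₁‖ * ‖f₁ t₂‖ * ‖f₃ t₂‖ = ‖f₂ t₂‖ * ‖f₁ t₁‖ * ‖f₃ t₁‖ ∧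
    ‖f₃ t₁‖ * ‖f₁ t₂‖ * ‖f₂ t₂‖ = ‖f₃ t₂‖ * ‖f₁ t₁‖ * ‖f₂ t₁‖ := by
  obtain ⟨s, rfl, rfl⟩ : ∃ s, t₁ = s + z ∧ t₂ = s - z :=
    ⟨t₂ + z, by rw [add_assoc, ← ht]; abel, by abel⟩
  set V := normProd f₁ f₂ f₃
  have hV : V (-z) = V z := normProd_neg h₁ h₂ h₃ z
  have M := h.norm_mul_norm_mul_norm h₂ h₃
  have E₁ : ‖f₁ (s + z)‖ * ‖f₂ (s - z)‖ * ‖f₃ (s - z)‖ = V s * V 0 * V z := by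
    convert M s 0 z using 4 <;> abel_nf
  have E₂ : ‖f₁ (s - z)‖ * ‖f₂ (s + z)‖ * ‖f₃ (s + z)‖ = V s * V 0 * V (-z) := by
    convert M s 0 (-z) using 4 <;> abel_nf
  have E₃ : ‖f₁ (s - z)‖ * ‖f₂ (s + z)‖ * ‖f₃ (s - z)‖ = V s * V (-z) * V 0 := by
    convert M s (-z) 0 using 4 <;> abel_nf
  have E₄ : ‖f₁ (s + z)‖ * ‖f₂ (s - z)‖ * ‖f₃ (s + z)‖ = V s * V z * V 0 := by
    convert M s z 0 using 4 <;> abel_nf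
  have F₁ : ‖f₁ (s - z)‖ * ‖f₂ (s - z)‖ * ‖f₃ (s + z)‖ = V (s - z) * V z * V (-z) := by
    convert M (s - z) z (-z) using 4 <;> abel_nf
  have F₂ : ‖f₁ (s + z)‖ * ‖f₂ (s - z)‖ * ‖f₃ (s - z)‖ = V z * V (s - z) * V z := by
    rw [← h₂.norm_map_neg]
    convert M z (s - z) z using 4 <;> abel_nf
  have F₃ : ‖f₁ (s + z)‖ * ‖f₂ (s + z)‖ * ‖f₃ (s - z)‖ = V (s + z) * V (-z) * V z := by
    convert M (s + z) (-z) z using 4 <;> abel_nf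
  have F₄ : ‖f₁ (s + z)‖ * ‖f₂ (s - z)‖ * ‖f₃ (s + z)‖ = V z * V (-z) * V (s + z) := by
    rw [← h₂.norm_map_neg, ← h₃.norm_map_neg (s + z)]
    convert M z (-z) (s + z) using 4 <;> abel_nf
  rw [hV] at E₂ E₃ F₁ F₃ F₄
  refine ⟨?_, ?_, ?_⟩
  · linear_combination E₁ - E₂
  · linear_combination E₃ - E₄
  · linear_combination F₁ - F₂ + E₁ - E₄ + F₄ - F₃

end SDTEq

theorem fin_three_perm_cases (σ : Equiv.Perm (Fin 3)) :
    σ 0 = 0 ∧ σ 1 = 1 ∧ σ 2 = 2 ∨ σ 0 = 0 ∧ σ 1 = 2 ∧ σ 2 = 1 ∨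
    σ 0 = 1 ∧ σ 1 = 0 ∧ σ 2 = 2 ∨ σ 0 = 1 ∧ σ 1 = 2 ∧ σ 2 = 0 ∨
    σ 0 = 2 ∧ σ 1 = 0 ∧ σ 2 = 1 ∨ σ 0 = 2 ∧ σ 1 = 1 ∧ σ 2 = 0 := by
  revert σ
  decide

theorem mul_mul_perm_eq {R : Type*} [CommSemigroup R] {a b : Fin 3 → R}
    (h₀ : a 0 * b 1 * b 2 = b 0 * a 1 * a 2) (h₁ : a 1 * b 0 * b 2 = b 1 * a 0 * a 2)
    (h₂ : a 2 * b 0 * b 1 = b 2 * a 0 * a 1) (σ : Equiv.Perm (Fin 3)) :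
    a (σ 0) * b (σ 1) * b (σ 2) = b (σ 0) * a (σ 1) * a (σ 2) := by
  rcases fin_three_perm_cases σ with ⟨e₀, e₁, e₂⟩ | ⟨e₀, e₁, e₂⟩ | ⟨e₀, e₁, e₂⟩ | ⟨e₀, e₁, e₂⟩ |
    ⟨e₀, e₁, e₂⟩ | ⟨e₀, e₁, e₂⟩ <;> rw [e₀, e₁, e₂]
  · exact h₀
  · rw [mul_right_comm, h₀, mul_right_comm]
  · exact h₁
  · rw [mul_right_comm, h₁, mul_right_comm]
  · exact h₂
  · rw [mul_right_comm, h₂, mul_right_comm]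

theorem SDT_coset_modulus_identity_general
    (Y : AddSubgroup ℚ)
    (f : Fin 3 → ↥Y → ℂ)
    (hpd : ∀ i, IsPosDefFn (f i))
    (heq : SDTEq (f 0) (f 1) (f 2))
    (t₁ t₂ : ↥Y) (ht : ∃ z : ↥Y, t₁ - t₂ = z + z) :
    ∀ σ : Equiv.Perm (Fin 3),
      ‖f (σ 0) t₁‖ * ‖f (σ 1) t₂‖ * ‖f (σ 2) t₂‖ =
        ‖f (σ 0) t₂‖ * ‖f (σ 1) t₁‖ * ‖f (σ 2) t₁‖ := by
  obtain ⟨z, hz⟩ := ht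
  obtain ⟨h₀, h₁, h₂⟩ := heq.norm_coset_identities (hpd 0) (hpd 1) (hpd 2) hz
  exact mul_mul_perm_eq (a := fun i ↦ ‖f i t₁‖) (b := fun i ↦ ‖f i t₂‖) h₀ h₁ h₂

/-- Let `Y` be a subgroup of `ℚ` and `f₁, f₂, f₃` normalized positive definite
functions on `Y` satisfying (S-D T). If `t₁, t₂ ∈ Y` lie in the same coset of
`2Y`, then for every permutation `(i₁, i₂, i₃)` of `(1, 2, 3)`:
`|f_{i₁}(t₁)|·|f_{i₂}(t₂)|·|f_{i₃}(t₂)| = |f_{i₁}(t₂)|·|f_{i₂}(t₁)|·|f_{i₃}(t₁)|`. -/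
theorem SDT_coset_modulus_identity
    (Y : AddSubgroup ℚ)
    (f : Fin 3 → ↥Y → ℂ)
    (hpd : ∀ i, IsPosDefFn (f i)) (hnorm : ∀ i, f i 0 = 1)
    (heq : SDTEq (f 0) (f 1) (f 2))
    (t₁ t₂ : ↥Y) (ht : ∃ z : ↥Y, t₁ - t₂ = z + z) :
    ∀ σ : Equiv.Perm (Fin 3),
      ‖f (σ 0) t₁‖ * ‖f (σ 1) t₂‖ * ‖f (σ 2) t₂‖ =
        ‖f (σ 0) t₂‖ * ‖f (σ 1) t₁‖ * ‖f (σ 2) t₁‖ :=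
  SDT_coset_modulus_identity_general Y f hpd heq t₁ t₂ ht
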